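/- arXiv:2410.03503 — 3 statements merged into one kernel-verified Lean document; each statement's English description precedes it below -/
import Mathlib

section
/- Céa's Lemma: Let V_h ⊆ V be a closed subspace. Let u ∈ V satisfy a(u,v) = l(v) for all v ∈ V, and let u_h ∈ V_h satisfy a(u_h, v_h) = l(v_h) for all v_h ∈ V_h. Then ‖u − u_h‖_V ≤ √(γ/α) · inf_{v_h ∈ V_h} ‖u − v_h‖_V. -/
theorem cea_lemma
    {V : Type*} [NormedAddCommGroup V] [InnerProductSpace ℝ V] [CompleteSpace V]
    (a : V →ₗ[ℝ] V →ₗ[ℝ] ℝ) (l : V →L[ℝ] ℝ)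
    (γ α : ℝ) (hγ : 0 < γ) (hα : 0 < α)
    (ha_symm : ∀ u v : V, a u v = a v u)
    (ha_cont : ∀ u v : V, |a u v| ≤ γ * ‖u‖ * ‖v‖)
    (ha_coer : ∀ u : V, α * ‖u‖ ^ 2 ≤ a u u)
    (Vh : Submodule ℝ V) (hVh : IsClosed (Vh : Set V))
    (u : V) (hu : ∀ v : V, a u v = l v)
    (uh : V) (huh : uh ∈ Vh) (huh_sol : ∀ vh ∈ Vh, a uh vh = l vh) :
    ‖u - uh‖ ≤ Real.sqrt (γ / α) * ⨅ vh : Vh, ‖u - (vh : V)‖ := by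
  have hc : 0 < Real.sqrt (γ / α) := Real.sqrt_pos.mpr (div_pos hγ hα)
  -- key pointwise estimate
  have key : ∀ vh ∈ Vh, ‖u - uh‖ ≤ Real.sqrt (γ / α) * ‖u - vh‖ := by
    intro vh hvh
    set e := u - uh with he
    set w := uh - vh with hw
    have hwVh : w ∈ Vh := Vh.sub_mem huh hvh
    -- Galerkin orthogonality
    have horth : a e w = 0 := by
      have : a (u - uh) w = a u w - a uh w := by
        simp [map_sub, LinearMap.sub_apply]
      rw [he, this, hu w, huh_sol w hwVh, sub_self]
    have horth' : a w e = 0 := by rw [ha_symm, horth]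
    have hsplit : u - vh = e + w := by rw [he, hw]; abel
    have hexp : a (u - vh) (u - vh) = a e e + a w w := by
      rw [hsplit]
      simp only [map_add, LinearMap.add_apply]
      rw [horth, horth']
      ring
    have hww : (0:ℝ) ≤ a w w := le_trans (by positivity) (ha_coer w)
    have h1 : α * ‖e‖ ^ 2 ≤ a (u - vh) (u - vh) := by
      have := ha_coer e
      linarith [hexp, hww]
    have h2 : a (u - vh) (u - vh) ≤ γ * ‖u - vh‖ ^ 2 := by
      have := ha_cont (u - vh) (u - vh)
      have habs := le_abs_self (a (u - vh) (u - vh))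
      nlinarith [norm_nonneg (u - vh)]
    have hsq : ‖e‖ ^ 2 ≤ (γ / α) * ‖u - vh‖ ^ 2 := by
      rw [div_mul_eq_mul_div, le_div_iff₀ hα]
      nlinarith
    calc ‖e‖ = Real.sqrt (‖e‖ ^ 2) := by
          rw [Real.sqrt_sq (norm_nonneg e)]
      _ ≤ Real.sqrt ((γ / α) * ‖u - vh‖ ^ 2) := Real.sqrt_le_sqrt hsq
      _ = Real.sqrt (γ / α) * ‖u - vh‖ := by
          rw [Real.sqrt_mul (le_of_lt (div_pos hγ hα)),
            Real.sqrt_sq (norm_nonneg _)]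
  -- pass to infimum
  rw [mul_comm, ← div_le_iff₀ hc] at *
  apply le_ciInf
  intro vh
  rw [div_le_iff₀ hc, mul_comm]
  exact key vh vh.2
end

section
/- Aubin–Nitsche Lemma (reformulated with an explicit bound in place of the supremum): Let V_h ⊆ V be a closed subspace, let u ∈ V satisfy a(u,v) = l(v) for all v ∈ V, and let u_h ∈ V_h satisfy a(u_h, v_h) = l(v_h) for all v_h ∈ V_h. Suppose that for every w ∈ W there exists a solution v_w ∈ V of the dual problem a(φ, v_w) = ⟨w, ι(φ)⟩_W for all φ ∈ V, and let S ≥ 0 be a constant such that inf_{v_h ∈ V_h} ‖v_w − v_h‖_V ≤ S‖w‖_W for every w ∈ W. Then ‖ι(u) − ι(u_h)‖_W ≤ γ · ‖u − u_h‖_V · S. -/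
/-!
Let `e = u - uh`, `w = ι e` and `z = vw w`. Testing the dual problem with `e` gives
`‖w‖² = a(e, z)`, and Galerkin orthogonality lets us replace `z` by `z - vh` for any `vh ∈ Vh`, so
continuity of `a` yields `‖w‖² ≤ γ ‖e‖ inf_{vh} ‖z - vh‖ ≤ γ ‖e‖ S ‖w‖`; dividing by `‖w‖` gives the
bound.
-/

theorem galerkin_orthogonality {R M N : Type*} [CommRing R] [AddCommGroup M] [Module R M]
    [AddCommGroup N] [Module R N] (a : M →ₗ[R] N →ₗ[R] R) (l : N → R) (Vh : Submodule R N)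
    {u uh : M} (hu : ∀ v, a u v = l v) (huh : ∀ vh ∈ Vh, a uh vh = l vh) :
    ∀ vh ∈ Vh, a (u - uh) vh = 0 := by
  intro vh hvh
  rw [map_sub, LinearMap.sub_apply, hu, huh vh hvh, sub_self]

theorem le_mul_iInf_norm_sub_of_orthogonal {V : Type*} [SeminormedAddCommGroup V]
    [NormedSpace ℝ V] (a : V →ₗ[ℝ] V →ₗ[ℝ] ℝ) {γ : ℝ} (hγ : 0 ≤ γ)
    (ha_cont : ∀ u v : V, |a u v| ≤ γ * ‖u‖ * ‖v‖) (Vh : Submodule ℝ V) {e : V}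
    (he : ∀ vh ∈ Vh, a e vh = 0) (z : V) :
    a e z ≤ γ * ‖e‖ * ⨅ vh : Vh, ‖z - vh‖ := by
  rw [Real.mul_iInf_of_nonneg (by positivity)]
  refine le_ciInf fun vh => ?_
  calc a e z = a e (z - vh) := by rw [map_sub, he vh vh.2, sub_zero]
    _ ≤ |a e (z - vh)| := le_abs_self _
    _ ≤ γ * ‖e‖ * ‖z - vh‖ := ha_cont _ _

theorem aubin_nitsche_general
    {V : Type*} [NormedAddCommGroup V] [InnerProductSpace ℝ V]
    (a : V →ₗ[ℝ] V →ₗ[ℝ] ℝ) (l : V →L[ℝ] ℝ)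
    (γ : ℝ) (hγ : 0 < γ)
    (ha_cont : ∀ u v : V, |a u v| ≤ γ * ‖u‖ * ‖v‖)
    {W : Type*} [NormedAddCommGroup W] [InnerProductSpace ℝ W]
    (ι : V →L[ℝ] W)
    (Vh : Submodule ℝ V)
    (u : V) (hu : ∀ v : V, a u v = l v)
    (uh : V) (huh_sol : ∀ vh ∈ Vh, a uh vh = l vh)
    (vw : W → V) (hvw : ∀ w : W, ∀ φ : V, a φ (vw w) = (inner ℝ w (ι φ) : ℝ))
    (S : ℝ) (hS : 0 ≤ S)
    (hbound : ∀ w : W, (⨅ vh : Vh, ‖vw w - (vh : V)‖) ≤ S * ‖w‖) :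
    ‖ι u - ι uh‖ ≤ γ * ‖u - uh‖ * S := by
  set w := ι u - ι uh
  have hdual : a (u - uh) (vw w) = ‖w‖ ^ 2 := by
    rw [hvw, map_sub, real_inner_self_eq_norm_sq]
  have hsq : ‖w‖ ^ 2 ≤ γ * ‖u - uh‖ * S * ‖w‖ :=
    calc ‖w‖ ^ 2 ≤ γ * ‖u - uh‖ * ⨅ vh : Vh, ‖vw w - vh‖ :=
          hdual ▸ le_mul_iInf_norm_sub_of_orthogonal a hγ.le ha_cont Vh
            (galerkin_orthogonality a l Vh hu huh_sol) (vw w)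
      _ ≤ γ * ‖u - uh‖ * (S * ‖w‖) := by gcongr; exact hbound w
      _ = γ * ‖u - uh‖ * S * ‖w‖ := by ring
  have hC : 0 ≤ γ * ‖u - uh‖ * S := by positivity
  nlinarith [norm_nonneg w]

theorem aubin_nitsche
    {V : Type*} [NormedAddCommGroup V] [InnerProductSpace ℝ V] [CompleteSpace V]
    (a : V →ₗ[ℝ] V →ₗ[ℝ] ℝ) (l : V →L[ℝ] ℝ)
    (γ α : ℝ) (hγ : 0 < γ) (hα : 0 < α)
    (ha_symm : ∀ u v : V, a u v = a v u)
    (ha_cont : ∀ u v : V, |a u v| ≤ γ * ‖u‖ * ‖v‖)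
    (ha_coer : ∀ u : V, α * ‖u‖ ^ 2 ≤ a u u)
    {W : Type*} [NormedAddCommGroup W] [InnerProductSpace ℝ W] [CompleteSpace W]
    (ι : V →L[ℝ] W) (hι : Function.Injective ι)
    (Vh : Submodule ℝ V) (hVh : IsClosed (Vh : Set V))
    (u : V) (hu : ∀ v : V, a u v = l v)
    (uh : V) (huh : uh ∈ Vh) (huh_sol : ∀ vh ∈ Vh, a uh vh = l vh)
    (vw : W → V) (hvw : ∀ w : W, ∀ φ : V, a φ (vw w) = (inner ℝ w (ι φ) : ℝ))
    (S : ℝ) (hS : 0 ≤ S)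
    (hbound : ∀ w : W, (⨅ vh : Vh, ‖vw w - (vh : V)‖) ≤ S * ‖w‖) :
    ‖ι u - ι uh‖ ≤ γ * ‖u - uh‖ * S :=
  aubin_nitsche_general a l γ hγ ha_cont ι Vh u hu uh huh_sol vw hvw S hS hbound
end

section
/- Key inequality in the proof of Céa's Lemma: Let V_h ⊆ V be a closed subspace, let u ∈ V satisfy a(u,v) = l(v) for all v ∈ V, and let u_h ∈ V_h satisfy a(u_h, v_h) = l(v_h) for all v_h ∈ V_h. Then for every v_h ∈ V_h one has α ‖u − u_h‖_V² ≤ a(u − u_h, u − v_h) ≤ γ ‖u − u_h‖_V ‖u − v_h‖_V. -/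
theorem cea_key_inequality
    {V : Type*} [NormedAddCommGroup V] [InnerProductSpace ℝ V] [CompleteSpace V]
    (a : V →ₗ[ℝ] V →ₗ[ℝ] ℝ) (l : V →L[ℝ] ℝ)
    (γ α : ℝ) (hγ : 0 < γ) (hα : 0 < α)
    (ha_symm : ∀ u v : V, a u v = a v u)
    (ha_cont : ∀ u v : V, |a u v| ≤ γ * ‖u‖ * ‖v‖)
    (ha_coer : ∀ u : V, α * ‖u‖ ^ 2 ≤ a u u)
    (Vh : Submodule ℝ V) (hVh : IsClosed (Vh : Set V))
    (u : V) (hu : ∀ v : V, a u v = l v)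
    (uh : V) (huh : uh ∈ Vh) (huh_sol : ∀ vh ∈ Vh, a uh vh = l vh) :
    ∀ vh ∈ Vh,
      α * ‖u - uh‖ ^ 2 ≤ a (u - uh) (u - vh) ∧
      a (u - uh) (u - vh) ≤ γ * ‖u - uh‖ * ‖u - vh‖ := by
  intro vh hvh
  have horth : ∀ wh ∈ Vh, a (u - uh) wh = 0 := by
    intro wh hwh
    have h1 : a u wh = l wh := hu wh
    have h2 : a uh wh = l wh := huh_sol wh hwh
    simp [map_sub, LinearMap.sub_apply, h1, h2]
  have hkey : a (u - uh) (u - vh) = a (u - uh) (u - uh) := by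
    have : a (u - uh) (u - vh) = a (u - uh) (u - uh) + a (u - uh) (uh - vh) := by
      rw [← map_add]
      congr 1
      abel
    rw [this, horth (uh - vh) (Vh.sub_mem huh hvh), add_zero]
  constructor
  · rw [hkey]; exact ha_coer _
  · exact le_trans (le_abs_self _) (ha_cont _ _)
end
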